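/- arXiv:1211.5051 — 13 statements merged into one kernel-verified Lean document; each statement's English description precedes it below -/
import Mathlib

section
/- Let ρ₁, ρ₂, ρ₃ be complex numbers with ρ₁ + ρ₂ + ρ₃ = 0. Define ξ = (1/4)(|ρ₁|² + |ρ₂|² + |ρ₃|²), χ = (1/4)(|ρ₁|⁴ + |ρ₂|⁴ + |ρ₃|⁴) and α = (1/2)|ρ₁² + ρ₂² + ρ₃²|. Then 8ξ² + α² = 6χ. -/
/-!
Writing `|ρ|² = ρ ρ̄`, the constraint becomes a polynomial identity in `ρᵢ` and `ρ̄ᵢ`. It holds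
for any two traceless triples `(a, b, c)`, `(x, y, z)` in a commutative ring, since after
eliminating `c` and `z` both sides are the same polynomial in `a, b, x, y`; the constraint is
the case `x = ā, y = b̄, z = c̄`.
-/

open ComplexConjugate

theorem two_mul_sq_add_sum_sq_mul_sum_sq_of_add_eq_zero {R : Type*} [CommRing R]
    {a b c x y z : R} (habc : a + b + c = 0) (hxyz : x + y + z = 0) :
    2 * (a * x + b * y + c * z) ^ 2 + (a ^ 2 + b ^ 2 + c ^ 2) * (x ^ 2 + y ^ 2 + z ^ 2) =
      6 * ((a * x) ^ 2 + (b * y) ^ 2 + (c * z) ^ 2) := by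
  obtain rfl : c = -a - b := by linear_combination habc
  obtain rfl : z = -x - y := by linear_combination hxyz
  ring

theorem Complex.two_mul_sq_sum_sq_norm_add_sq_norm_sum_sq_of_add_eq_zero {a b c : ℂ}
    (h : a + b + c = 0) :
    2 * (‖a‖ ^ 2 + ‖b‖ ^ 2 + ‖c‖ ^ 2) ^ 2 + ‖a ^ 2 + b ^ 2 + c ^ 2‖ ^ 2 =
      6 * (‖a‖ ^ 4 + ‖b‖ ^ 4 + ‖c‖ ^ 4) := by
  have hconj : conj a + conj b + conj c = 0 := by simpa using congrArg conj h
  apply Complex.ofReal_injective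
  push_cast
  simp only [← Complex.mul_conj', map_add, map_pow,
    show ∀ r : ℂ, r ^ 4 = (r ^ 2) ^ 2 from fun r => by ring]
  linear_combination two_mul_sq_add_sum_sq_mul_sum_sq_of_add_eq_zero h hconj

/-- The scalar constraint `8ξ² + α² = 6χ` on the Bel–Robinson eigenvalues,
where `ρ₁, ρ₂, ρ₃` are the (traceless) Weyl eigenvalues. -/
theorem belRobinson_scalar_constraint (ρ₁ ρ₂ ρ₃ : ℂ) (hsum : ρ₁ + ρ₂ + ρ₃ = 0)
    (ξ χ α : ℝ)
    (hξ : ξ = (1/4) * (‖ρ₁‖ ^ 2 + ‖ρ₂‖ ^ 2 + ‖ρ₃‖ ^ 2))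
    (hχ : χ = (1/4) * (‖ρ₁‖ ^ 4 + ‖ρ₂‖ ^ 4 + ‖ρ₃‖ ^ 4))
    (hα : α = (1/2) * ‖ρ₁ ^ 2 + ρ₂ ^ 2 + ρ₃ ^ 2‖) :
    8 * ξ ^ 2 + α ^ 2 = 6 * χ := by
  subst hξ hχ hα
  linear_combination
    (1/4) * Complex.two_mul_sq_sum_sq_norm_add_sq_norm_sum_sq_of_add_eq_zero hsum
end

section
/- Let ρ₁, ρ₂, ρ₃ be complex numbers with ρ₁ + ρ₂ + ρ₃ = 0, and set τ₁ = ρ₂·conj(ρ₃), τ₂ = ρ₃·conj(ρ₁), τ₃ = ρ₁·conj(ρ₂). Then Im(τ₁) = Im(τ₂) = Im(τ₃), and setting κᵢ = −(1/2)Re(τᵢ) for i = 1,2,3 and κ = −(1/2)Im(τ₃), one has |ρᵢ|² = 2(κⱼ + κₖ) for every permutation {i,j,k} = {1,2,3}, and κ² = κ₁κ₂ + κ₂κ₃ + κ₃κ₁. -/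
/-!
Read `a + b + c = 0` as a triangle of side vectors in `ℂ ≅ ℝ²`: `Re (a * conj b)` is the dot product
and `Im (a * conj b)` the cross product of two sides. All cross products equal twice the signed area,
expanding `a * conj a = -(b * conj a + c * conj a)` gives `|a|²` as minus a sum of two dot products,
and Lagrange's identity `|a|²|b|² = (a·b)² + (a×b)²` then turns into `κ² = κ₁κ₂ + κ₂κ₃ + κ₃κ₁`.
-/

open ComplexConjugate

namespace Complex

section TriangleOfSides

variable {a b c : ℂ}

theorem im_mul_conj_eq_of_add_eq_zero (h : a + b + c = 0) :
    (b * conj c).im = (a * conj b).im := by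
  obtain rfl : c = -(a + b) := by linear_combination h
  simp only [mul_im, map_neg, map_add, neg_re, neg_im, add_re, add_im, conj_re, conj_im]
  ring

theorem sq_norm_eq_neg_re_add_re_of_add_eq_zero (h : a + b + c = 0) :
    ‖a‖ ^ 2 = -((c * conj a).re + (a * conj b).re) := by
  have hconj : a * conj a = -(c * conj a) - b * conj a := by linear_combination conj a * h
  calc ‖a‖ ^ 2 = (a * conj a).re := by rw [mul_conj, ofReal_re, normSq_eq_norm_sq]
    _ = -((c * conj a).re + (b * conj a).re) := by rw [hconj, sub_re, neg_re]; ring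
    _ = -((c * conj a).re + (a * conj b).re) := by simp only [mul_re, conj_re, conj_im]; ring

theorem im_mul_conj_sq_eq_of_add_eq_zero (h : a + b + c = 0) :
    (a * conj b).im ^ 2 = (b * conj c).re * (c * conj a).re + (c * conj a).re * (a * conj b).re
      + (a * conj b).re * (b * conj c).re := by
  have lagrange : ‖a‖ ^ 2 * ‖b‖ ^ 2 - (a * conj b).re ^ 2 = (a * conj b).im ^ 2 := by
    rw [← mul_pow, ← norm_conj b, ← norm_mul, sq_norm_sub_sq_re]
  have hb : b + c + a = 0 := by linear_combination h
  rw [sq_norm_eq_neg_re_add_re_of_add_eq_zero h, sq_norm_eq_neg_re_add_re_of_add_eq_zero hb]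
    at lagrange
  linear_combination -lagrange

end TriangleOfSides

end Complex

/-- The κ-parametrization of the Bel–Robinson eigenvalues: with
`τ₁ = ρ₂·conj ρ₃`, `τ₂ = ρ₃·conj ρ₁`, `τ₃ = ρ₁·conj ρ₂`, all three `τᵢ` have the
same imaginary part; setting `κᵢ = −(1/2)Re τᵢ` and `κ = −(1/2)Im τ₃`, one has
`tᵢ = |ρᵢ|² = 2(κⱼ + κₖ)` and `κ² = κ₁κ₂ + κ₂κ₃ + κ₃κ₁`. -/
theorem belRobinson_kappa_parametrization (ρ₁ ρ₂ ρ₃ : ℂ) (hsum : ρ₁ + ρ₂ + ρ₃ = 0)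
    (τ₁ τ₂ τ₃ : ℂ)
    (hτ₁ : τ₁ = ρ₂ * (starRingEnd ℂ) ρ₃)
    (hτ₂ : τ₂ = ρ₃ * (starRingEnd ℂ) ρ₁)
    (hτ₃ : τ₃ = ρ₁ * (starRingEnd ℂ) ρ₂)
    (κ₁ κ₂ κ₃ κ : ℝ)
    (hκ₁ : κ₁ = -(1/2) * τ₁.re) (hκ₂ : κ₂ = -(1/2) * τ₂.re) (hκ₃ : κ₃ = -(1/2) * τ₃.re)
    (hκ : κ = -(1/2) * τ₃.im) :
    (τ₁.im = τ₂.im ∧ τ₂.im = τ₃.im) ∧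
    ‖ρ₁‖ ^ 2 = 2 * (κ₂ + κ₃) ∧
    ‖ρ₂‖ ^ 2 = 2 * (κ₃ + κ₁) ∧
    ‖ρ₃‖ ^ 2 = 2 * (κ₁ + κ₂) ∧
    κ ^ 2 = κ₁ * κ₂ + κ₂ * κ₃ + κ₃ * κ₁ := by
  have hsum₂ : ρ₂ + ρ₃ + ρ₁ = 0 := by linear_combination hsum
  have hsum₃ : ρ₃ + ρ₁ + ρ₂ = 0 := by linear_combination hsum
  subst hτ₁ hτ₂ hτ₃ hκ₁ hκ₂ hκ₃ hκ
  refine ⟨⟨(Complex.im_mul_conj_eq_of_add_eq_zero hsum₂).symm,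
    (Complex.im_mul_conj_eq_of_add_eq_zero hsum₃).symm⟩, ?_, ?_, ?_, ?_⟩
  · rw [Complex.sq_norm_eq_neg_re_add_re_of_add_eq_zero hsum]; ring
  · rw [Complex.sq_norm_eq_neg_re_add_re_of_add_eq_zero hsum₂]; ring
  · rw [Complex.sq_norm_eq_neg_re_add_re_of_add_eq_zero hsum₃]; ring
  · linear_combination (1 / 4 : ℝ) * Complex.im_mul_conj_sq_eq_of_add_eq_zero hsum
end

section
/- Let ρ₁, ρ₂, ρ₃ be complex numbers with ρ₁ + ρ₂ + ρ₃ = 0. Define ξ = (1/4)(|ρ₁|² + |ρ₂|² + |ρ₃|²), χ = (1/4)(|ρ₁|⁴ + |ρ₂|⁴ + |ρ₃|⁴) and α = (1/2)|ρ₁² + ρ₂² + ρ₃²|. Then χ ≥ (1/2)α² ≥ 0 and ξ² ≥ (1/4)α². -/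
/-! When `ρ₁ + ρ₂ + ρ₃ = 0` the square of `ρ₁² + ρ₂² + ρ₃²` equals `2 (ρ₁⁴ + ρ₂⁴ + ρ₃⁴)`, so the
triangle inequality for the quartic sum gives `α² ≤ 2χ`. The triangle inequality for the quadratic
sum gives `0 ≤ α ≤ 2ξ`, whence `α² ≤ 4ξ²`. -/

theorem sq_sum_sq_eq_two_mul_sum_pow_four {R : Type*} [CommRing R] {a b c : R}
    (h : a + b + c = 0) : (a ^ 2 + b ^ 2 + c ^ 2) ^ 2 = 2 * (a ^ 4 + b ^ 4 + c ^ 4) := by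
  obtain rfl : c = -a - b := by linear_combination h
  ring

theorem norm_pow_add_pow_add_pow_le {α : Type*} [NormedDivisionRing α] (a b c : α) (n : ℕ) :
    ‖a ^ n + b ^ n + c ^ n‖ ≤ ‖a‖ ^ n + ‖b‖ ^ n + ‖c‖ ^ n := by
  simpa only [norm_pow] using norm_add₃_le (a := a ^ n) (b := b ^ n) (c := c ^ n)

theorem norm_sum_sq_sq_le_two_mul_sum_norm_pow_four {𝕜 : Type*} [RCLike 𝕜] {a b c : 𝕜}
    (h : a + b + c = 0) :
    ‖a ^ 2 + b ^ 2 + c ^ 2‖ ^ 2 ≤ 2 * (‖a‖ ^ 4 + ‖b‖ ^ 4 + ‖c‖ ^ 4) := by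
  calc ‖a ^ 2 + b ^ 2 + c ^ 2‖ ^ 2 = 2 * ‖a ^ 4 + b ^ 4 + c ^ 4‖ := by
        rw [← norm_pow, sq_sum_sq_eq_two_mul_sum_pow_four h, norm_mul, RCLike.norm_two]
    _ ≤ 2 * (‖a‖ ^ 4 + ‖b‖ ^ 4 + ‖c‖ ^ 4) := by
        gcongr
        exact norm_pow_add_pow_add_pow_le a b c 4

/-- The invariant-level super-energy inequalities `χ ≥ (1/2)α² ≥ 0` and
`ξ² ≥ (1/4)α²` on the Bel–Robinson scalar invariants. -/
theorem belRobinson_invariant_inequalities (ρ₁ ρ₂ ρ₃ : ℂ) (hsum : ρ₁ + ρ₂ + ρ₃ = 0)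
    (ξ χ α : ℝ)
    (hξ : ξ = (1/4) * (‖ρ₁‖ ^ 2 + ‖ρ₂‖ ^ 2 + ‖ρ₃‖ ^ 2))
    (hχ : χ = (1/4) * (‖ρ₁‖ ^ 4 + ‖ρ₂‖ ^ 4 + ‖ρ₃‖ ^ 4))
    (hα : α = (1/2) * ‖ρ₁ ^ 2 + ρ₂ ^ 2 + ρ₃ ^ 2‖) :
    χ ≥ (1/2) * α ^ 2 ∧ (1/2) * α ^ 2 ≥ 0 ∧ ξ ^ 2 ≥ (1/4) * α ^ 2 := by
  have hα_nonneg : 0 ≤ α := by rw [hα]; positivity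
  have hα_le_two_ξ : α ≤ 2 * ξ := by
    rw [hα, hξ]
    linarith [norm_pow_add_pow_add_pow_le ρ₁ ρ₂ ρ₃ 2]
  refine ⟨?_, by positivity, ?_⟩
  · rw [hχ, hα]
    linarith [norm_sum_sq_sq_le_two_mul_sum_norm_pow_four hsum]
  · nlinarith [mul_le_mul hα_le_two_ξ hα_le_two_ξ hα_nonneg (by linarith)]
end

section
/- Let ρ₁, ρ₂, ρ₃ be complex numbers with ρ₁ + ρ₂ + ρ₃ = 0, and set τ₁ = ρ₂·conj(ρ₃), τ₂ = ρ₃·conj(ρ₁), τ₃ = ρ₁·conj(ρ₂). Then: (i) (|ρ₁|⁴ + |ρ₂|⁴ + |ρ₃|⁴)² = |ρ₁|⁸ + |ρ₂|⁸ + |ρ₃|⁸ + 2(|τ₁|⁴ + |τ₂|⁴ + |τ₃|⁴); (ii) |ρ₁|⁸ + |ρ₂|⁸ + |ρ₃|⁸ + 2·Re(τ₁⁴ + τ₂⁴ + τ₃⁴) = (1/4)|ρ₁² + ρ₂² + ρ₃²|⁴; and consequently (|ρ₁|⁴ + |ρ₂|⁴ + |ρ₃|⁴)² ≥ (1/4)|ρ₁²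 + ρ₂² + ρ₃²|⁴. -/
/-!
The nine numbers `ρᵢ * conj ρⱼ` (the `tᵢ`, `τᵢ` and `conj τᵢ`) have fourth powers summing to
`(Σ ρᵢ⁴) * conj (Σ ρⱼ⁴) = |Σ ρᵢ⁴|²`, and Newton's identity for `ρ₁ + ρ₂ + ρ₃ = 0` gives
`2 Σ ρᵢ⁴ = (Σ ρᵢ²)²`. The inequality then follows from `Re (τ⁴) ≤ |τ|⁴`.
-/

open Complex ComplexConjugate

namespace Complex

theorem normSq_add_add (a b c : ℂ) :
    normSq (a + b + c) =
      normSq a + normSq b + normSq c + 2 * (b * conj c + c * conj a + a * conj b).re := by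
  simp only [normSq_apply, add_re, add_im, mul_re, conj_re, conj_im]
  ring

theorem normSq_add_add_pow (ρ₁ ρ₂ ρ₃ : ℂ) (n : ℕ) :
    normSq (ρ₁ ^ n + ρ₂ ^ n + ρ₃ ^ n) =
      normSq ρ₁ ^ n + normSq ρ₂ ^ n + normSq ρ₃ ^ n +
        2 * ((ρ₂ * conj ρ₃) ^ n + (ρ₃ * conj ρ₁) ^ n + (ρ₁ * conj ρ₂) ^ n).re := by
  simp only [normSq_add_add, map_pow, mul_pow]

theorem re_add_add_pow_le (z w u : ℂ) (n : ℕ) :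
    (z ^ n + w ^ n + u ^ n).re ≤ ‖z‖ ^ n + ‖w‖ ^ n + ‖u‖ ^ n := by
  simp only [add_re, ← norm_pow]
  gcongr <;> exact re_le_norm _

end Complex

theorem two_mul_pow_four_add_add_of_add_add_eq_zero {R : Type*} [CommRing R] {a b c : R}
    (h : a + b + c = 0) :
    2 * (a ^ 4 + b ^ 4 + c ^ 4) = (a ^ 2 + b ^ 2 + c ^ 2) ^ 2 := by
  obtain rfl : c = -(a + b) := by linear_combination h
  ring

/-- The eigenvalue computation `16χ² = Σtᵢ⁴ + 2Σ|τₖ|⁴ ≥ Σ(tᵢ⁴ + τᵢ⁴ + conj(τᵢ)⁴) = tr T⁴ = 4α⁴`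
used in the proof of Proposition 1. -/
theorem belRobinson_trace_fourth_power (ρ₁ ρ₂ ρ₃ : ℂ) (hsum : ρ₁ + ρ₂ + ρ₃ = 0)
    (τ₁ τ₂ τ₃ : ℂ)
    (hτ₁ : τ₁ = ρ₂ * (starRingEnd ℂ) ρ₃)
    (hτ₂ : τ₂ = ρ₃ * (starRingEnd ℂ) ρ₁)
    (hτ₃ : τ₃ = ρ₁ * (starRingEnd ℂ) ρ₂) :
    (‖ρ₁‖ ^ 4 + ‖ρ₂‖ ^ 4 + ‖ρ₃‖ ^ 4) ^ 2 =
      ‖ρ₁‖ ^ 8 + ‖ρ₂‖ ^ 8 + ‖ρ₃‖ ^ 8 +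
        2 * (‖τ₁‖ ^ 4 + ‖τ₂‖ ^ 4 + ‖τ₃‖ ^ 4) ∧
    ‖ρ₁‖ ^ 8 + ‖ρ₂‖ ^ 8 + ‖ρ₃‖ ^ 8 +
        2 * (τ₁ ^ 4 + τ₂ ^ 4 + τ₃ ^ 4).re =
      (1/4) * ‖ρ₁ ^ 2 + ρ₂ ^ 2 + ρ₃ ^ 2‖ ^ 4 ∧
    (‖ρ₁‖ ^ 4 + ‖ρ₂‖ ^ 4 + ‖ρ₃‖ ^ 4) ^ 2 ≥
      (1/4) * ‖ρ₁ ^ 2 + ρ₂ ^ 2 + ρ₃ ^ 2‖ ^ 4 := by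
  subst hτ₁ hτ₂ hτ₃
  have norm_pow_four (z : ℂ) : ‖z‖ ^ 4 = normSq z ^ 2 := by rw [← Complex.sq_norm, ← pow_mul]
  have norm_pow_eight (z : ℂ) : ‖z‖ ^ 8 = normSq z ^ 4 := by rw [← Complex.sq_norm, ← pow_mul]
  have hnorm : (‖ρ₁‖ ^ 4 + ‖ρ₂‖ ^ 4 + ‖ρ₃‖ ^ 4) ^ 2 =
      ‖ρ₁‖ ^ 8 + ‖ρ₂‖ ^ 8 + ‖ρ₃‖ ^ 8 +
        2 * (‖ρ₂ * conj ρ₃‖ ^ 4 + ‖ρ₃ * conj ρ₁‖ ^ 4 + ‖ρ₁ * conj ρ₂‖ ^ 4) := by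
    simp only [norm_mul, norm_conj]
    ring
  have htrace : ‖ρ₁‖ ^ 8 + ‖ρ₂‖ ^ 8 + ‖ρ₃‖ ^ 8 +
        2 * ((ρ₂ * conj ρ₃) ^ 4 + (ρ₃ * conj ρ₁) ^ 4 + (ρ₁ * conj ρ₂) ^ 4).re =
      1 / 4 * ‖ρ₁ ^ 2 + ρ₂ ^ 2 + ρ₃ ^ 2‖ ^ 4 := by
    rw [norm_pow_eight, norm_pow_eight, norm_pow_eight, ← normSq_add_add_pow, norm_pow_four,
      ← map_pow, ← two_mul_pow_four_add_add_of_add_add_eq_zero hsum, normSq_mul, normSq_ofNat]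
    ring
  refine ⟨hnorm, htrace, ?_⟩
  have hre := re_add_add_pow_le (ρ₂ * conj ρ₃) (ρ₃ * conj ρ₁) (ρ₁ * conj ρ₂) 4
  linarith
end

section
/- Let ρ₁, ρ₂, ρ₃ be complex numbers with ρ₁ + ρ₂ + ρ₃ = 0. Then |ρ₁|⁴ + |ρ₂|⁴ + |ρ₃|⁴ = (1/2)(|ρ₁|² + |ρ₂|² + |ρ₃|²)² − 2·(Im(ρ₁·conj(ρ₂)))². -/
/-! Eliminate `ρ₃ = -(ρ₁ + ρ₂)`. With `x = |ρ₁|²`, `y = |ρ₂|²` and `w = ρ₁ conj ρ₂ = p + iq`,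
one has `|ρ₃|² = x + y + 2p`, and both sides become polynomials in `x, y, p, q`; their difference
is `2(p² + q² − xy)`, which vanishes because `|w|² = xy`. -/

open ComplexConjugate

theorem Complex.sq_norm_of_add_add_eq_zero {a b c : ℂ} (h : a + b + c = 0) :
    ‖c‖ ^ 2 = ‖a‖ ^ 2 + ‖b‖ ^ 2 + 2 * (a * conj b).re := by
  obtain rfl : c = -(a + b) := by linear_combination h
  simp only [norm_neg, Complex.sq_norm, Complex.normSq_add]

theorem Complex.re_sq_add_im_sq_mul_conj (a b : ℂ) :
    (a * conj b).re ^ 2 + (a * conj b).im ^ 2 = ‖a‖ ^ 2 * ‖b‖ ^ 2 := by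
  rw [← mul_pow, ← Complex.norm_conj b, ← norm_mul, ← Complex.sq_norm_sub_sq_re]
  ring

/-- The identity `χ = 2ξ² − 2κ²` underlying the diagram analysis of type I classes:
`Σ|ρᵢ|⁴ = (1/2)(Σ|ρᵢ|²)² − 2(Im(ρ₁·conj ρ₂))²`. -/
theorem belRobinson_chi_xi_kappa_identity (ρ₁ ρ₂ ρ₃ : ℂ) (hsum : ρ₁ + ρ₂ + ρ₃ = 0) :
    ‖ρ₁‖ ^ 4 + ‖ρ₂‖ ^ 4 + ‖ρ₃‖ ^ 4 =
      (1/2) * (‖ρ₁‖ ^ 2 + ‖ρ₂‖ ^ 2 + ‖ρ₃‖ ^ 2) ^ 2 -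
        2 * (ρ₁ * (starRingEnd ℂ) ρ₂).im ^ 2 := by
  have hρ₃ := Complex.sq_norm_of_add_add_eq_zero hsum
  have hw := Complex.re_sq_add_im_sq_mul_conj ρ₁ ρ₂
  rw [show ‖ρ₃‖ ^ 4 = (‖ρ₃‖ ^ 2) ^ 2 by ring, hρ₃]
  linear_combination 2 * hw
end

section
/- Let ρ₁, ρ₂, ρ₃ be complex numbers with ρ₁ + ρ₂ + ρ₃ = 0. Then 2(|ρ₁|⁴ + |ρ₂|⁴ + |ρ₃|⁴) ≤ (|ρ₁|² + |ρ₂|² + |ρ₃|²)², with equality if and only if Im(ρ₁·conj(ρ₂)) = 0. -/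
/-!
Since `ρ₁ + ρ₂ + ρ₃ = 0`, the three numbers are the sides of a (possibly degenerate) triangle in
the plane, of area `|Im(ρ₁ conj ρ₂)| / 2`. With `xᵢ = |ρᵢ|²`, Heron's formula
`16 · area² = (x₁ + x₂ + x₃)² - 2 (x₁² + x₂² + x₃²)` gives the inequality, with equality exactly
for degenerate triangles.
-/

open ComplexConjugate

theorem Complex.norm_pow_four (z : ℂ) : ‖z‖ ^ 4 = (z.re ^ 2 + z.im ^ 2) ^ 2 := by
  rw [show ‖z‖ ^ 4 = (‖z‖ ^ 2) ^ 2 by ring, Complex.sq_norm, Complex.normSq_apply]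
  ring

theorem Complex.heron_of_add_add_eq_zero {a b c : ℂ} (h : a + b + c = 0) :
    2 * (‖a‖ ^ 4 + ‖b‖ ^ 4 + ‖c‖ ^ 4) + 4 * (a * conj b).im ^ 2 =
      (‖a‖ ^ 2 + ‖b‖ ^ 2 + ‖c‖ ^ 2) ^ 2 := by
  obtain rfl : c = -a - b := by linear_combination h
  simp only [Complex.norm_pow_four, Complex.sq_norm, Complex.normSq_apply, Complex.mul_im,
    Complex.conj_re, Complex.conj_im, Complex.sub_re, Complex.sub_im, Complex.neg_re,
    Complex.neg_im]
  ring

/-- `χ ≤ 2ξ²`: every type I metric lies inside the circle C of Section 6.1, and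
the equality case `Im(ρ₁·conj ρ₂) = 0` characterizes the super-energy
non-radiative fields lying on the circumference. -/
theorem belRobinson_chi_le_two_xi_sq (ρ₁ ρ₂ ρ₃ : ℂ) (hsum : ρ₁ + ρ₂ + ρ₃ = 0) :
    2 * (‖ρ₁‖ ^ 4 + ‖ρ₂‖ ^ 4 + ‖ρ₃‖ ^ 4) ≤
      (‖ρ₁‖ ^ 2 + ‖ρ₂‖ ^ 2 + ‖ρ₃‖ ^ 2) ^ 2 ∧
    (2 * (‖ρ₁‖ ^ 4 + ‖ρ₂‖ ^ 4 + ‖ρ₃‖ ^ 4) =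
        (‖ρ₁‖ ^ 2 + ‖ρ₂‖ ^ 2 + ‖ρ₃‖ ^ 2) ^ 2 ↔
      (ρ₁ * (starRingEnd ℂ) ρ₂).im = 0) := by
  rw [← Complex.heron_of_add_add_eq_zero hsum]
  refine ⟨le_add_of_nonneg_right (by positivity), ?_⟩
  rw [eq_comm, add_eq_left]
  simp
end

section
/- Let ρ₁, ρ₂, ρ₃ be complex numbers with ρ₁ + ρ₂ + ρ₃ = 0. Define ξ = (1/4)(|ρ₁|² + |ρ₂|² + |ρ₃|²) and α = (1/2)|ρ₁² + ρ₂² + ρ₃²|. Then 2ξ² − (1/2)α² = (3/2)·(Im(ρ₁·conj(ρ₂)))²; equivalently, with κ = −(1/2)Im(ρ₁·conj(ρ₂)), the proper scalar of the stress flux satisfies ξ_Q² := 2ξ² − (1/2)α² = 6κ². -/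
open ComplexConjugate

theorem Complex.sq_sum_sq_norm_sub_sq_norm_sum_sq {a b c : ℂ} (h : a + b + c = 0) :
    (‖a‖ ^ 2 + ‖b‖ ^ 2 + ‖c‖ ^ 2) ^ 2 - ‖a ^ 2 + b ^ 2 + c ^ 2‖ ^ 2 = 12 * (a * conj b).im ^ 2 := by
  obtain rfl : c = -(a + b) := by linear_combination h
  simp only [Complex.sq_norm]
  simp only [Complex.normSq_apply, pow_two, Complex.add_re, Complex.add_im,
    Complex.mul_re, Complex.mul_im, Complex.neg_re, Complex.neg_im, Complex.conj_re,
    Complex.conj_im]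
  ring

/-- The proper scalar of the stress flux: `ξ_Q² = 2ξ² − (1/2)α² = 6κ²` with
`κ = −(1/2)Im(ρ₁·conj ρ₂)`. -/
theorem proper_stress_flux_scalar (ρ₁ ρ₂ ρ₃ : ℂ) (hsum : ρ₁ + ρ₂ + ρ₃ = 0)
    (ξ α κ : ℝ)
    (hξ : ξ = (1/4) * (‖ρ₁‖ ^ 2 + ‖ρ₂‖ ^ 2 + ‖ρ₃‖ ^ 2))
    (hα : α = (1/2) * ‖ρ₁ ^ 2 + ρ₂ ^ 2 + ρ₃ ^ 2‖)
    (hκ : κ = -(1/2) * (ρ₁ * (starRingEnd ℂ) ρ₂).im) :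
    2 * ξ ^ 2 - (1/2) * α ^ 2 = (3/2) * (ρ₁ * (starRingEnd ℂ) ρ₂).im ^ 2 ∧
    2 * ξ ^ 2 - (1/2) * α ^ 2 = 6 * κ ^ 2 := by
  have hQ : 2 * ξ ^ 2 - (1/2) * α ^ 2 = (3/2) * (ρ₁ * conj ρ₂).im ^ 2 := by
    rw [hξ, hα]
    linear_combination (1/8) * Complex.sq_sum_sq_norm_sub_sq_norm_sum_sq hsum
  exact ⟨hQ, by rw [hQ, hκ]; ring⟩
end

section
/- Let ρ₁, ρ₂, ρ₃ be complex numbers with ρ₁ + ρ₂ + ρ₃ = 0, and set τ₁ = ρ₂·conj(ρ₃), τ₂ = ρ₃·conj(ρ₁), τ₃ = ρ₁·conj(ρ₂), ξ = (1/4)(|ρ₁|² + |ρ₂|² + |ρ₃|²), α = (1/2)|ρ₁² + ρ₂² + ρ₃²|. Then the following are equivalent: (i) τ₁, τ₂ and τ₃ are all real; (ii) there exist a real number θ and real numbers r₁, r₂, r₃ with ρ_k = r_k·e^{iθ} for k = 1,2,3; (iii) 4ξ² = α². -/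
/-!
With `ρ₃ = -(ρ₁ + ρ₂)`, all three `τᵢ` have the same imaginary part `Im (ρ₁ ρ̄₂)`, and
`(Σ |ρᵢ|²)² - |Σ ρᵢ²|² = 12 Im (ρ₁ ρ̄₂)²`, i.e. `4ξ² - α² = 3 Im (ρ₁ ρ̄₂)²`. Two complex numbers
share a phase `e^{iθ}` exactly when `z w̄` is real, and then so does `ρ₃ = -(ρ₁ + ρ₂)`. Hence each
of the three conditions says `Im (ρ₁ ρ̄₂) = 0`.
-/

open Complex ComplexConjugate

namespace Complex

theorem im_mul_conj_eq_of_add_add_eq_zero {a b c : ℂ} (h : a + b + c = 0) :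
    (b * conj c).im = (a * conj b).im ∧ (c * conj a).im = (a * conj b).im := by
  obtain rfl : c = -(a + b) := by linear_combination h
  simp only [map_neg, map_add, mul_im, neg_re, neg_im, add_re, add_im, conj_re, conj_im]
  constructor <;> ring

theorem ofReal_mul_exp_mul_conj_ofReal_mul_exp (r s θ : ℝ) :
    r * exp (θ * I) * conj (s * exp (θ * I)) = ((r * s : ℝ) : ℂ) := by
  rw [map_mul, conj_ofReal, ← exp_conj, map_mul, conj_ofReal, conj_I]
  push_cast
  calc (r : ℂ) * exp (θ * I) * (s * exp (θ * -I))
      = r * s * exp (θ * I + θ * -I) := by rw [exp_add]; ring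
    _ = r * s := by simp

theorem exists_ofReal_mul_of_im_mul_conj_eq_zero {z w : ℂ} (hz : z ≠ 0)
    (h : (w * conj z).im = 0) : ∃ t : ℝ, w = t * z := by
  refine ⟨(w * conj z).re / normSq z, ?_⟩
  have hn : (normSq z : ℂ) ≠ 0 := by exact_mod_cast normSq_pos.2 hz |>.ne'
  have hw : w * conj z = ((w * conj z).re : ℂ) := ext rfl (by simpa using h)
  push_cast
  rw [← hw, ← mul_conj, div_mul_eq_mul_div, eq_div_iff (by rwa [mul_conj])]
  ring

theorem exists_common_phase_iff_im_mul_conj_eq_zero (z w : ℂ) :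
    (∃ θ r s : ℝ, z = r * exp (θ * I) ∧ w = s * exp (θ * I)) ↔ (z * conj w).im = 0 := by
  constructor
  · rintro ⟨θ, r, s, rfl, rfl⟩
    rw [ofReal_mul_exp_mul_conj_ofReal_mul_exp, ofReal_im]
  · intro h
    by_cases hz : z = 0
    · exact ⟨w.arg, 0, ‖w‖, by simp [hz], (norm_mul_exp_arg_mul_I w).symm⟩
    · have h' : (w * conj z).im = 0 := by
        rw [← conj_conj (w * conj z), conj_im, map_mul, conj_conj, mul_comm, h, neg_zero]
      obtain ⟨t, rfl⟩ := exists_ofReal_mul_of_im_mul_conj_eq_zero hz h'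
      refine ⟨z.arg, ‖z‖, t * ‖z‖, (norm_mul_exp_arg_mul_I z).symm, ?_⟩
      conv_lhs => rw [← norm_mul_exp_arg_mul_I z]
      push_cast
      ring

theorem sq_sum_sq_norm_sub_sq_norm_sum_sq_s7 {a b c : ℂ} (h : a + b + c = 0) :
    (‖a‖ ^ 2 + ‖b‖ ^ 2 + ‖c‖ ^ 2) ^ 2 - ‖a ^ 2 + b ^ 2 + c ^ 2‖ ^ 2 = 12 * (a * conj b).im ^ 2 := by
  obtain rfl : c = -(a + b) := by linear_combination h
  simp only [Complex.sq_norm]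
  simp only [normSq_apply, neg_re, neg_im, add_re, add_im, mul_re, mul_im,
    conj_re, conj_im, pow_two]
  ring

end Complex

/-- Characterization of the García-Parrado (super-energy) non-radiative fields at
the eigenvalue level (Theorem 5): the complex Bel–Robinson eigenvalues `τᵢ` are
all real iff the Weyl eigenvalues lie on a real line through the origin
(`ρₖ = rₖ e^{iθ}`), iff `4ξ² = α²` (i.e. `ξ_Q = 0`). -/
theorem garciaParrado_non_radiative_characterization (ρ₁ ρ₂ ρ₃ : ℂ)
    (hsum : ρ₁ + ρ₂ + ρ₃ = 0)
    (τ₁ τ₂ τ₃ : ℂ)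
    (hτ₁ : τ₁ = ρ₂ * (starRingEnd ℂ) ρ₃)
    (hτ₂ : τ₂ = ρ₃ * (starRingEnd ℂ) ρ₁)
    (hτ₃ : τ₃ = ρ₁ * (starRingEnd ℂ) ρ₂)
    (ξ α : ℝ)
    (hξ : ξ = (1/4) * (‖ρ₁‖ ^ 2 + ‖ρ₂‖ ^ 2 + ‖ρ₃‖ ^ 2))
    (hα : α = (1/2) * ‖ρ₁ ^ 2 + ρ₂ ^ 2 + ρ₃ ^ 2‖) :
    ((τ₁.im = 0 ∧ τ₂.im = 0 ∧ τ₃.im = 0) ↔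
      (∃ (θ r₁ r₂ r₃ : ℝ), ρ₁ = (r₁ : ℂ) * Complex.exp (θ * Complex.I) ∧
        ρ₂ = (r₂ : ℂ) * Complex.exp (θ * Complex.I) ∧
        ρ₃ = (r₃ : ℂ) * Complex.exp (θ * Complex.I))) ∧
    ((∃ (θ r₁ r₂ r₃ : ℝ), ρ₁ = (r₁ : ℂ) * Complex.exp (θ * Complex.I) ∧
        ρ₂ = (r₂ : ℂ) * Complex.exp (θ * Complex.I) ∧
        ρ₃ = (r₃ : ℂ) * Complex.exp (θ * Complex.I)) ↔
      4 * ξ ^ 2 = α ^ 2) := by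
  subst hτ₁ hτ₂ hτ₃ hξ hα
  have hreal : (ρ₂ * conj ρ₃).im = 0 ∧ (ρ₃ * conj ρ₁).im = 0 ∧ (ρ₁ * conj ρ₂).im = 0 ↔
      (ρ₁ * conj ρ₂).im = 0 := by
    obtain ⟨h₂₃, h₃₁⟩ := im_mul_conj_eq_of_add_add_eq_zero hsum
    rw [h₂₃, h₃₁]
    tauto
  have hphase : (∃ θ r₁ r₂ r₃ : ℝ, ρ₁ = r₁ * exp (θ * I) ∧ ρ₂ = r₂ * exp (θ * I) ∧
      ρ₃ = r₃ * exp (θ * I)) ↔ (ρ₁ * conj ρ₂).im = 0 := by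
    rw [← exists_common_phase_iff_im_mul_conj_eq_zero]
    constructor
    · rintro ⟨θ, r₁, r₂, -, h₁, h₂, -⟩
      exact ⟨θ, r₁, r₂, h₁, h₂⟩
    · rintro ⟨θ, r₁, r₂, h₁, h₂⟩
      refine ⟨θ, r₁, r₂, -(r₁ + r₂), h₁, h₂, ?_⟩
      push_cast
      linear_combination hsum - h₁ - h₂
  have hsq : 4 * ((1/4) * (‖ρ₁‖ ^ 2 + ‖ρ₂‖ ^ 2 + ‖ρ₃‖ ^ 2)) ^ 2 =
      ((1/2) * ‖ρ₁ ^ 2 + ρ₂ ^ 2 + ρ₃ ^ 2‖) ^ 2 ↔ (ρ₁ * conj ρ₂).im = 0 := by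
    have := sq_sum_sq_norm_sub_sq_norm_sum_sq_s7 hsum
    constructor
    · intro h
      exact pow_eq_zero_iff two_ne_zero |>.1 (by linarith)
    · intro h
      rw [h] at this
      linarith
  exact ⟨hreal.trans hphase.symm, hphase.trans hsq.symm⟩
end

section
/- Let r₁, r₂, r₃ be real numbers, not all zero, with r₁ + r₂ + r₃ = 0, and define κᵢ = −(1/2)·rⱼ·rₖ for every permutation {i,j,k} = {1,2,3}. Then: (a) two of the r_i are equal and nonzero if and only if, after a permutation of indices, κ₂ = κ₃ > 0 and κ₁ = −(1/2)κ₂ < 0; (b) some r_i equals zero if and only if, after a permutation of indices, κ₁ = κ₂ = 0 < κ₃. -/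
lemma perm_of_distinct (a b c : Fin 3) (hab : a ≠ b) (hac : a ≠ c) (hbc : b ≠ c) :
    ∃ σ : Equiv.Perm (Fin 3), σ 0 = a ∧ σ 1 = b ∧ σ 2 = c := by
  have hinj : Function.Injective ![a, b, c] := by
    intro x y h
    fin_cases x <;> fin_cases y <;> simp_all
  have hbij : Function.Bijective ![a, b, c] := Finite.injective_iff_bijective.mp hinj
  exact ⟨Equiv.ofBijective _ hbij, by simp, by simp, by simp⟩

lemma pair01 (r κ : Fin 3 → ℝ) (e0 : κ 0 = -(1/2) * r 1 * r 2)
    (e1 : κ 1 = -(1/2) * r 0 * r 2) (e2 : κ 2 = -(1/2) * r 0 * r 1)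
    (hsum : r 0 + r 1 + r 2 = 0) (hrij : r 0 = r 1) (h0 : r 0 ≠ 0) :
    ∃ σ : Equiv.Perm (Fin 3), κ (σ 1) = κ (σ 2) ∧ 0 < κ (σ 1) ∧
      κ (σ 0) = -(1/2) * κ (σ 1) ∧ κ (σ 0) < 0 := by
  have v : r 2 = -2 * r 0 := by linarith
  have hp : 0 < r 0 * r 0 := mul_self_pos.mpr h0
  have k0 : κ 0 = r 0 * r 0 := by rw [e0, ← hrij, v]; ring
  have k1 : κ 1 = r 0 * r 0 := by rw [e1, v]; ring
  have k2 : κ 2 = -(1/2) * (r 0 * r 0) := by rw [e2, ← hrij]; ring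
  obtain ⟨σ, s0, s1, s2⟩ := perm_of_distinct 2 0 1 (by decide) (by decide) (by decide)
  refine ⟨σ, ?_, ?_, ?_, ?_⟩ <;> simp only [s0, s1, s2, k0, k1, k2] <;> linarith

lemma pair02 (r κ : Fin 3 → ℝ) (e0 : κ 0 = -(1/2) * r 1 * r 2)
    (e1 : κ 1 = -(1/2) * r 0 * r 2) (e2 : κ 2 = -(1/2) * r 0 * r 1)
    (hsum : r 0 + r 1 + r 2 = 0) (hrij : r 0 = r 2) (h0 : r 0 ≠ 0) :
    ∃ σ : Equiv.Perm (Fin 3), κ (σ 1) = κ (σ 2) ∧ 0 < κ (σ 1) ∧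
      κ (σ 0) = -(1/2) * κ (σ 1) ∧ κ (σ 0) < 0 := by
  have v : r 1 = -2 * r 0 := by linarith
  have hp : 0 < r 0 * r 0 := mul_self_pos.mpr h0
  have k0 : κ 0 = r 0 * r 0 := by rw [e0, ← hrij, v]; ring
  have k2 : κ 2 = r 0 * r 0 := by rw [e2, v]; ring
  have k1 : κ 1 = -(1/2) * (r 0 * r 0) := by rw [e1, ← hrij]; ring
  obtain ⟨σ, s0, s1, s2⟩ := perm_of_distinct 1 0 2 (by decide) (by decide) (by decide)
  refine ⟨σ, ?_, ?_, ?_, ?_⟩ <;> simp only [s0, s1, s2, k0, k1, k2] <;> linarith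

lemma pair12 (r κ : Fin 3 → ℝ) (e0 : κ 0 = -(1/2) * r 1 * r 2)
    (e1 : κ 1 = -(1/2) * r 0 * r 2) (e2 : κ 2 = -(1/2) * r 0 * r 1)
    (hsum : r 0 + r 1 + r 2 = 0) (hrij : r 1 = r 2) (h0 : r 1 ≠ 0) :
    ∃ σ : Equiv.Perm (Fin 3), κ (σ 1) = κ (σ 2) ∧ 0 < κ (σ 1) ∧
      κ (σ 0) = -(1/2) * κ (σ 1) ∧ κ (σ 0) < 0 := by
  have v : r 0 = -2 * r 1 := by linarith
  have hp : 0 < r 1 * r 1 := mul_self_pos.mpr h0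
  have k1 : κ 1 = r 1 * r 1 := by rw [e1, ← hrij, v]; ring
  have k2 : κ 2 = r 1 * r 1 := by rw [e2, v]; ring
  have k0 : κ 0 = -(1/2) * (r 1 * r 1) := by rw [e0, ← hrij]; ring
  obtain ⟨σ, s0, s1, s2⟩ := perm_of_distinct 0 1 2 (by decide) (by decide) (by decide)
  refine ⟨σ, ?_, ?_, ?_, ?_⟩ <;> simp only [s0, s1, s2, k0, k1, k2] <;> linarith

/-- Classification part of Proposition 5: with real Weyl eigenvalue moduli
`r₁ + r₂ + r₃ = 0`, not all zero, and principal super-stresses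
`κᵢ = −(1/2) rⱼ rₖ`: (a) two of the `rᵢ` are equal and nonzero (type D) iff after
a permutation `κ₂ = κ₃ > 0` and `κ₁ = −(1/2)κ₂ < 0`; (b) some `rᵢ = 0`
(type IM^∞) iff after a permutation `κ₁ = κ₂ = 0 < κ₃`. -/
theorem principal_superstresses_classification (r : Fin 3 → ℝ)
    (hsum : r 0 + r 1 + r 2 = 0) (hne : r ≠ 0)
    (κ : Fin 3 → ℝ)
    (hκ : ∀ i j k : Fin 3, i ≠ j → j ≠ k → i ≠ k → κ i = -(1/2) * r j * r k) :
    ((∃ i j : Fin 3, i ≠ j ∧ r i = r j ∧ r i ≠ 0) ↔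
      (∃ σ : Equiv.Perm (Fin 3), κ (σ 1) = κ (σ 2) ∧ 0 < κ (σ 1) ∧
        κ (σ 0) = -(1/2) * κ (σ 1) ∧ κ (σ 0) < 0)) ∧
    ((∃ i : Fin 3, r i = 0) ↔
      (∃ σ : Equiv.Perm (Fin 3), κ (σ 0) = 0 ∧ κ (σ 1) = 0 ∧ 0 < κ (σ 2))) := by
  have e0 : κ 0 = -(1/2) * r 1 * r 2 := hκ 0 1 2 (by decide) (by decide) (by decide)
  have e1 : κ 1 = -(1/2) * r 0 * r 2 := hκ 1 0 2 (by decide) (by decide) (by decide)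
  have e2 : κ 2 = -(1/2) * r 0 * r 1 := hκ 2 0 1 (by decide) (by decide) (by decide)
  constructor
  · constructor
    · rintro ⟨i, j, hij, hrij, hr0⟩
      fin_cases i <;> fin_cases j
      · exact absurd rfl hij
      · exact pair01 r κ e0 e1 e2 hsum hrij hr0
      · exact pair02 r κ e0 e1 e2 hsum hrij hr0
      · exact pair01 r κ e0 e1 e2 hsum hrij.symm (fun h => hr0 (hrij.trans h))
      · exact absurd rfl hij
      · exact pair12 r κ e0 e1 e2 hsum hrij hr0
      · exact pair02 r κ e0 e1 e2 hsum hrij.symm (fun h => hr0 (hrij.trans h))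
      · exact pair12 r κ e0 e1 e2 hsum hrij.symm (fun h => hr0 (hrij.trans h))
      · exact absurd rfl hij
    · rintro ⟨σ, h1, h2, h3, h4⟩
      have ea : κ (σ 0) = -(1/2) * r (σ 1) * r (σ 2) :=
        hκ _ _ _ (σ.injective.ne (by decide)) (σ.injective.ne (by decide))
          (σ.injective.ne (by decide))
      have eb : κ (σ 1) = -(1/2) * r (σ 0) * r (σ 2) :=
        hκ _ _ _ (σ.injective.ne (by decide)) (σ.injective.ne (by decide))
          (σ.injective.ne (by decide))
      have ec : κ (σ 2) = -(1/2) * r (σ 0) * r (σ 1) :=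
        hκ _ _ _ (σ.injective.ne (by decide)) (σ.injective.ne (by decide))
          (σ.injective.ne (by decide))
      have hane : r (σ 0) ≠ 0 := by
        intro h
        rw [h] at eb
        norm_num at eb
        linarith
      have hmul : r (σ 0) * r (σ 2) = r (σ 0) * r (σ 1) := by
        nlinarith [h1, eb, ec]
      have hbc : r (σ 1) = r (σ 2) := (mul_left_cancel₀ hane hmul).symm
      have hb : r (σ 1) ≠ 0 := by
        intro h
        rw [ea, ← hbc, h] at h4
        norm_num at h4
      exact ⟨σ 1, σ 2, σ.injective.ne (by decide), hbc, hb⟩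
  · constructor
    · rintro ⟨i, hi⟩
      fin_cases i
      · replace hi : r 0 = 0 := hi
        have hb : r 1 ≠ 0 := by
          intro h
          have h2 : r 2 = 0 := by linarith
          have hall : ∀ x : Fin 3, r x = 0 := by
            intro x; fin_cases x <;> first | exact hi | exact h | exact h2
          exact hne (funext fun x => hall x)
        have v : r 2 = -r 1 := by linarith
        obtain ⟨σ, s0, s1, s2⟩ := perm_of_distinct 1 2 0 (by decide) (by decide) (by decide)
        refine ⟨σ, ?_, ?_, ?_⟩ <;> simp only [s0, s1, s2]
        · rw [e1, hi]; ring
        · rw [e2, hi]; ring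
        · rw [e0, v]; nlinarith [mul_self_pos.mpr hb]
      · replace hi : r 1 = 0 := hi
        have hb : r 0 ≠ 0 := by
          intro h
          have h2 : r 2 = 0 := by linarith
          have hall : ∀ x : Fin 3, r x = 0 := by
            intro x; fin_cases x <;> first | exact hi | exact h | exact h2
          exact hne (funext fun x => hall x)
        have v : r 2 = -r 0 := by linarith
        obtain ⟨σ, s0, s1, s2⟩ := perm_of_distinct 0 2 1 (by decide) (by decide) (by decide)
        refine ⟨σ, ?_, ?_, ?_⟩ <;> simp only [s0, s1, s2]
        · rw [e0, hi]; ring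
        · rw [e2, hi]; ring
        · rw [e1, v]; nlinarith [mul_self_pos.mpr hb]
      · replace hi : r 2 = 0 := hi
        have hb : r 0 ≠ 0 := by
          intro h
          have h2 : r 1 = 0 := by linarith
          have hall : ∀ x : Fin 3, r x = 0 := by
            intro x; fin_cases x <;> first | exact hi | exact h | exact h2
          exact hne (funext fun x => hall x)
        have v : r 1 = -r 0 := by linarith
        obtain ⟨σ, s0, s1, s2⟩ := perm_of_distinct 0 1 2 (by decide) (by decide) (by decide)
        refine ⟨σ, ?_, ?_, ?_⟩ <;> simp only [s0, s1, s2]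
        · rw [e0, hi]; ring
        · rw [e1, hi]; ring
        · rw [e2, v]; nlinarith [mul_self_pos.mpr hb]
    · rintro ⟨σ, h1, h2, h3⟩
      have ea : κ (σ 0) = -(1/2) * r (σ 1) * r (σ 2) :=
        hκ _ _ _ (σ.injective.ne (by decide)) (σ.injective.ne (by decide))
          (σ.injective.ne (by decide))
      have ec : κ (σ 2) = -(1/2) * r (σ 0) * r (σ 1) :=
        hκ _ _ _ (σ.injective.ne (by decide)) (σ.injective.ne (by decide))
          (σ.injective.ne (by decide))
      have hb : r (σ 1) ≠ 0 := by
        intro h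
        rw [ec, h] at h3
        norm_num at h3
      have hm : r (σ 1) * r (σ 2) = 0 := by nlinarith [h1, ea]
      rcases mul_eq_zero.mp hm with h | h
      · exact absurd h hb
      · exact ⟨σ 2, h⟩
end

section
/- Let ρ₁, ρ₂, ρ₃ be complex numbers with ρ₁ + ρ₂ + ρ₃ = 0. Then 12·(Im(ρ₁·conj(ρ₂)))² ≤ (|ρ₁|² + |ρ₂|² + |ρ₃|²)², with equality if and only if |ρ₁| = |ρ₂| = |ρ₃|. -/
/-!
Since `ρ₁ + ρ₂ + ρ₃ = 0`, the `ρᵢ` are the sides of a (possibly degenerate) triangle with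
squared side lengths `tᵢ = |ρᵢ|²`, and `|Im(ρ₁ ρ̄₂)|` is twice its area. Heron's formula thus gives
`4 Im(ρ₁ ρ̄₂)² = 2(t₁t₂ + t₂t₃ + t₃t₁) - (t₁² + t₂² + t₃²)`, and
`(t₁ + t₂ + t₃)² - 3 (2(t₁t₂ + t₂t₃ + t₃t₁) - (t₁² + t₂² + t₃²)) = 2 Σ_{i<j} (tᵢ - tⱼ)² ≥ 0`,
with equality exactly when all `tᵢ` agree.
-/

open ComplexConjugate

/-- Sixteen times the squared area of a triangle with squared side lengths `t₁ t₂ t₃`. -/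
def heron (t₁ t₂ t₃ : ℝ) : ℝ :=
  2 * (t₁ * t₂ + t₂ * t₃ + t₃ * t₁) - (t₁ ^ 2 + t₂ ^ 2 + t₃ ^ 2)

section Heron

variable (t₁ t₂ t₃ : ℝ)

lemma sq_sum_sub_three_mul_heron :
    (t₁ + t₂ + t₃) ^ 2 - 3 * heron t₁ t₂ t₃ =
      2 * ((t₁ - t₂) ^ 2 + (t₂ - t₃) ^ 2 + (t₁ - t₃) ^ 2) := by
  unfold heron
  ring

lemma three_mul_heron_le_sq_sum : 3 * heron t₁ t₂ t₃ ≤ (t₁ + t₂ + t₃) ^ 2 := by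
  have := sq_sum_sub_three_mul_heron t₁ t₂ t₃
  linarith [sq_nonneg (t₁ - t₂), sq_nonneg (t₂ - t₃), sq_nonneg (t₁ - t₃)]

lemma three_mul_heron_eq_sq_sum_iff :
    3 * heron t₁ t₂ t₃ = (t₁ + t₂ + t₃) ^ 2 ↔ t₁ = t₂ ∧ t₂ = t₃ := by
  have hdiff := sq_sum_sub_three_mul_heron t₁ t₂ t₃
  constructor
  · intro h
    have h₁₂ : (t₁ - t₂) ^ 2 = 0 := by
      linarith [sq_nonneg (t₁ - t₂), sq_nonneg (t₂ - t₃), sq_nonneg (t₁ - t₃)]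
    have h₂₃ : (t₂ - t₃) ^ 2 = 0 := by
      linarith [sq_nonneg (t₁ - t₂), sq_nonneg (t₂ - t₃), sq_nonneg (t₁ - t₃)]
    simp only [ne_eq, OfNat.ofNat_ne_zero, not_false_eq_true, pow_eq_zero_iff, sub_eq_zero]
      at h₁₂ h₂₃
    exact ⟨h₁₂, h₂₃⟩
  · rintro ⟨rfl, rfl⟩
    unfold heron
    ring

end Heron

lemma Complex.four_mul_im_mul_conj_sq_eq_heron {ρ₁ ρ₂ ρ₃ : ℂ} (h : ρ₁ + ρ₂ + ρ₃ = 0) :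
    4 * (ρ₁ * conj ρ₂).im ^ 2 = heron (‖ρ₁‖ ^ 2) (‖ρ₂‖ ^ 2) (‖ρ₃‖ ^ 2) := by
  have hρ₃ : normSq ρ₃ = normSq ρ₁ + normSq ρ₂ + 2 * (ρ₁ * conj ρ₂).re := by
    rw [eq_neg_of_add_eq_zero_right h, normSq_neg, normSq_add]
  have hmul : (ρ₁ * conj ρ₂).re ^ 2 + (ρ₁ * conj ρ₂).im ^ 2 = normSq ρ₁ * normSq ρ₂ := by
    rw [← normSq_conj ρ₂, ← normSq_mul, normSq_apply]
    ring
  simp only [Complex.sq_norm, heron, hρ₃]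
  linear_combination 4 * hmul

/-- The adimensional radiation parameter satisfies `κ̄² ≤ 1/3`:
`12 (Im(ρ₁·conj ρ₂))² ≤ (Σ|ρᵢ|²)²`, with equality iff `|ρ₁| = |ρ₂| = |ρ₃|`
(type IM^{-6}, the 'most radiative' type I case). -/
theorem radiation_parameter_bound (ρ₁ ρ₂ ρ₃ : ℂ) (hsum : ρ₁ + ρ₂ + ρ₃ = 0) :
    12 * (ρ₁ * (starRingEnd ℂ) ρ₂).im ^ 2 ≤
      (‖ρ₁‖ ^ 2 + ‖ρ₂‖ ^ 2 + ‖ρ₃‖ ^ 2) ^ 2 ∧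
    (12 * (ρ₁ * (starRingEnd ℂ) ρ₂).im ^ 2 =
        (‖ρ₁‖ ^ 2 + ‖ρ₂‖ ^ 2 + ‖ρ₃‖ ^ 2) ^ 2 ↔
      (‖ρ₁‖ = ‖ρ₂‖ ∧ ‖ρ₂‖ = ‖ρ₃‖)) := by
  have hheron : 12 * (ρ₁ * conj ρ₂).im ^ 2 = 3 * heron (‖ρ₁‖ ^ 2) (‖ρ₂‖ ^ 2) (‖ρ₃‖ ^ 2) := by
    linarith [Complex.four_mul_im_mul_conj_sq_eq_heron hsum]
  rw [hheron, three_mul_heron_eq_sq_sum_iff, sq_eq_sq₀ (norm_nonneg _) (norm_nonneg _),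
    sq_eq_sq₀ (norm_nonneg _) (norm_nonneg _)]
  exact ⟨three_mul_heron_le_sq_sum _ _ _, Iff.rfl⟩
end

section
/- Let τ, q, t, Q, T, α, ξ be nonnegative real numbers satisfying the quadratic scalar constraints 4α² = τ² − 4q² + 6t² − 4Q² + T², α² = τ² − 3q² + 3t² − Q², and (1/2)α² = −τ² − 2q² + 3t², together with τ² − q² ≥ ξ² and ξ² ≥ (1/4)α². Then Q² − q² = 3(τ² − t²) ≥ 0 and 3τ − T ≥ 0. -/
/-- Proposition 4: under the quadratic scalar constraints and the super-energy
inequalities, the super-energy scalars satisfy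
`|Q⊥|² − |q⊥|² = 3(τ² − |t⊥|²) ≥ 0` and `3τ − |T⊥| ≥ 0`. -/
theorem superenergy_scalar_constraints (τ q t Q T α ξ : ℝ)
    (hτ : 0 ≤ τ) (hq : 0 ≤ q) (ht : 0 ≤ t) (hQ : 0 ≤ Q) (hT : 0 ≤ T)
    (hα : 0 ≤ α) (hξ : 0 ≤ ξ)
    (hc1 : 4 * α ^ 2 = τ ^ 2 - 4 * q ^ 2 + 6 * t ^ 2 - 4 * Q ^ 2 + T ^ 2)
    (hc2 : α ^ 2 = τ ^ 2 - 3 * q ^ 2 + 3 * t ^ 2 - Q ^ 2)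
    (hc3 : (1/2) * α ^ 2 = -τ ^ 2 - 2 * q ^ 2 + 3 * t ^ 2)
    (hse1 : τ ^ 2 - q ^ 2 ≥ ξ ^ 2)
    (hse2 : ξ ^ 2 ≥ (1/4) * α ^ 2) :
    Q ^ 2 - q ^ 2 = 3 * (τ ^ 2 - t ^ 2) ∧ 3 * (τ ^ 2 - t ^ 2) ≥ 0 ∧
      3 * τ - T ≥ 0 := by
  refine ⟨by nlinarith, by nlinarith, ?_⟩
  nlinarith [sq_nonneg (3*τ - T), sq_nonneg (3*τ + T), sq_nonneg q, mul_nonneg hτ hT]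
end

section
/- Let ρ₁, ρ₂, ρ₃ be complex numbers with ρ₁ + ρ₂ + ρ₃ = 0, and set κᵢ = −(1/2)Re(ρⱼ·conj(ρₖ)) for every even permutation (i,j,k) of (1,2,3), ξ = (1/4)(|ρ₁|² + |ρ₂|² + |ρ₃|²), α = (1/2)|ρ₁² + ρ₂² + ρ₃²|. Then κ₁² + κ₂² + κ₃² = (1/3)ξ² + (1/6)α². -/
/-!
Write `a, b, c` for `‖ρ₁‖², ‖ρ₂‖², ‖ρ₃‖²`. Since `ρ₁ + ρ₂ + ρ₃ = 0`, the polarization identity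
`‖z + w‖² = ‖z‖² + ‖w‖² + 2 Re (z w̄)` expresses every `Re (ρᵢ ρ̄ⱼ)` through `a, b, c`; hence
`κ₁ = (b + c - a) / 4` and cyclically, and `ξ = (a + b + c) / 4`. Expanding `‖ρ₁² + ρ₂² + ρ₃²‖²`
the same way, with `Re (p²) = 2 (Re p)² - ‖p‖²` for `p = ρᵢ ρ̄ⱼ`, gives
`4 α² = 6 (a² + b² + c²) - 2 (a + b + c)²`. The claim is then a polynomial identity in `a, b, c`.
-/

open ComplexConjugate

namespace Complex

theorem sq_norm_add_add (x y z : ℂ) :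
    ‖x + y + z‖ ^ 2 = ‖x‖ ^ 2 + ‖y‖ ^ 2 + ‖z‖ ^ 2 +
      2 * ((x * conj y).re + (y * conj z).re + (x * conj z).re) := by
  simp only [Complex.sq_norm, normSq_add, add_mul, mul_add, add_re]
  ring

theorem re_sq_eq (p : ℂ) : (p ^ 2).re = 2 * p.re ^ 2 - ‖p‖ ^ 2 := by
  rw [Complex.sq_norm, normSq_apply, pow_two, mul_re]
  ring

theorem re_mul_conj_of_add_add_eq_zero {u z w : ℂ} (h : u + z + w = 0) :
    (z * conj w).re = (‖u‖ ^ 2 - ‖z‖ ^ 2 - ‖w‖ ^ 2) / 2 := by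
  rw [show u = -(z + w) by linear_combination h, norm_neg]
  simp only [Complex.sq_norm, normSq_add]
  ring

theorem sq_norm_sq_add_sq_add_sq_of_add_add_eq_zero {ρ₁ ρ₂ ρ₃ : ℂ} (h : ρ₁ + ρ₂ + ρ₃ = 0) :
    ‖ρ₁ ^ 2 + ρ₂ ^ 2 + ρ₃ ^ 2‖ ^ 2 =
      6 * ((‖ρ₁‖ ^ 2) ^ 2 + (‖ρ₂‖ ^ 2) ^ 2 + (‖ρ₃‖ ^ 2) ^ 2) -
        2 * (‖ρ₁‖ ^ 2 + ‖ρ₂‖ ^ 2 + ‖ρ₃‖ ^ 2) ^ 2 := by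
  have h₁₂ := re_mul_conj_of_add_add_eq_zero (u := ρ₃) (z := ρ₁) (w := ρ₂) (by linear_combination h)
  have h₂₃ := re_mul_conj_of_add_add_eq_zero (u := ρ₁) (z := ρ₂) (w := ρ₃) h
  have h₁₃ := re_mul_conj_of_add_add_eq_zero (u := ρ₂) (z := ρ₁) (w := ρ₃) (by linear_combination h)
  simp only [sq_norm_add_add, map_pow, ← mul_pow, re_sq_eq, norm_pow, norm_mul, norm_conj,
    h₁₂, h₂₃, h₁₃]
  ring

end Complex

/-- Verification of Theorem 4 for the observer at rest: the norm of the proper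
super-stress tensor equals the proper super-stress scalar,
`κ₁² + κ₂² + κ₃² = (1/3)ξ² + (1/6)α²`. -/
theorem proper_superstress_scalar (ρ₁ ρ₂ ρ₃ : ℂ) (hsum : ρ₁ + ρ₂ + ρ₃ = 0)
    (κ₁ κ₂ κ₃ ξ α : ℝ)
    (hκ₁ : κ₁ = -(1/2) * (ρ₂ * (starRingEnd ℂ) ρ₃).re)
    (hκ₂ : κ₂ = -(1/2) * (ρ₃ * (starRingEnd ℂ) ρ₁).re)
    (hκ₃ : κ₃ = -(1/2) * (ρ₁ * (starRingEnd ℂ) ρ₂).re)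
    (hξ : ξ = (1/4) * (‖ρ₁‖ ^ 2 + ‖ρ₂‖ ^ 2 + ‖ρ₃‖ ^ 2))
    (hα : α = (1/2) * ‖ρ₁ ^ 2 + ρ₂ ^ 2 + ρ₃ ^ 2‖) :
    κ₁ ^ 2 + κ₂ ^ 2 + κ₃ ^ 2 = (1/3) * ξ ^ 2 + (1/6) * α ^ 2 := by
  have hα_sq : α ^ 2 = (1/4) * ‖ρ₁ ^ 2 + ρ₂ ^ 2 + ρ₃ ^ 2‖ ^ 2 := by rw [hα]; ring
  rw [hκ₁, hκ₂, hκ₃, hξ, hα_sq, Complex.sq_norm_sq_add_sq_add_sq_of_add_add_eq_zero hsum,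
    Complex.re_mul_conj_of_add_add_eq_zero hsum,
    Complex.re_mul_conj_of_add_add_eq_zero (u := ρ₂) (by linear_combination hsum),
    Complex.re_mul_conj_of_add_add_eq_zero (u := ρ₃) (by linear_combination hsum)]
  ring
end

section
/- Let ρ₁, ρ₂, ρ₃ be complex numbers with ρ₁ + ρ₂ + ρ₃ = 0, and set κᵢ = −(1/2)Re(ρⱼ·conj(ρₖ)) for every even permutation (i,j,k) of (1,2,3). Then κ₁² + κ₂² + κ₃² ≤ (κ₁ + κ₂ + κ₃)², i.e. κ₁κ₂ + κ₂κ₃ + κ₃κ₁ ≥ 0, with equality if and only if Im(ρ₁·conj(ρ₂)) = 0. -/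
/-- Section 6.2: the principal super-stresses satisfy
`κ₁² + κ₂² + κ₃² ≤ (κ₁ + κ₂ + κ₃)²`, i.e. `κ₁κ₂ + κ₂κ₃ + κ₃κ₁ ≥ 0`, with
equality iff `Im(ρ₁·conj ρ₂) = 0` (the non-radiative fields lie exactly on the
circumference of the circle). -/
theorem superstress_circle_inequality (ρ₁ ρ₂ ρ₃ : ℂ) (hsum : ρ₁ + ρ₂ + ρ₃ = 0)
    (κ₁ κ₂ κ₃ : ℝ)
    (hκ₁ : κ₁ = -(1/2) * (ρ₂ * (starRingEnd ℂ) ρ₃).re)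
    (hκ₂ : κ₂ = -(1/2) * (ρ₃ * (starRingEnd ℂ) ρ₁).re)
    (hκ₃ : κ₃ = -(1/2) * (ρ₁ * (starRingEnd ℂ) ρ₂).re) :
    (κ₁ ^ 2 + κ₂ ^ 2 + κ₃ ^ 2 ≤ (κ₁ + κ₂ + κ₃) ^ 2 ∧
      0 ≤ κ₁ * κ₂ + κ₂ * κ₃ + κ₃ * κ₁) ∧
    (κ₁ ^ 2 + κ₂ ^ 2 + κ₃ ^ 2 = (κ₁ + κ₂ + κ₃) ^ 2 ↔
      (ρ₁ * (starRingEnd ℂ) ρ₂).im = 0) := by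
  have hρ₃ : ρ₃ = -ρ₁ - ρ₂ := by linear_combination hsum
  subst hρ₃ hκ₁ hκ₂ hκ₃
  set a := ρ₁.re; set b := ρ₁.im; set c := ρ₂.re; set d := ρ₂.im
  simp only [Complex.mul_re, Complex.mul_im, Complex.conj_re, Complex.conj_im,
    Complex.sub_re, Complex.sub_im, Complex.neg_re, Complex.neg_im]
  constructor
  · constructor
    · nlinarith [sq_nonneg (a*d - b*c), sq_nonneg (a*d + b*c)]
    · nlinarith [sq_nonneg (a*d - b*c)]
  · constructor
    · intro h
      have : (a*d - b*c)^2 = 0 := by nlinarith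
      have := pow_eq_zero_iff (n := 2) (by norm_num) |>.mp this
      linarith
    · intro h
      have : a * d - b * c = 0 := by linarith
      nlinarith [this]
end
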